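/- Let λ > 0, let k < l be natural numbers, and let p be a real polynomial of degree k all of whose coefficients are nonnegative. Define Φ(r) = p(r) e^{−√λ r} / r^l for r > 0. Then Φ'(r) = −q(r) e^{−√λ r} / r^{l+1} for all r > 0, where q(r) = (l + √λ r) p(r) − r p'(r) is a polynomial of degree k + 1 all of whose coefficients are nonnegative. Consequently Φ is nonnegative and nonincreasing on (0, ∞), and iterating, the j-th derivative Φ^{(j)} is nonnegative on (0,∞) for j even and nonpositive for j odd. -/

import Mathlib

/-!
Differentiating `p(r) e^{-s r} / r^l` gives `-q(r) e^{-s r} / r^{l+1}` with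
`q = (l + s X) p - X p'`, whose coefficients are `q₀ = l p₀` and
`q_{i+1} = (l - (i+1)) p_{i+1} + s p_i`. When `s ≥ 0`, `p ≥ 0` coefficientwise and
`deg p ≤ l`, these are nonnegative and `deg q ≤ l + 1`, so `q` satisfies the same hypotheses
with `l + 1` in place of `l`. Each derivative therefore flips the sign of a function of the
same shape, and functions of this shape are nonnegative on `(0, ∞)`.
-/

open Polynomial Filter Set Topology

namespace Polynomial

theorem eval_nonneg_of_coeff_nonneg {R : Type*} [CommSemiring R] [PartialOrder R]
    [IsOrderedRing R] {p : R[X]} (hp : ∀ i, 0 ≤ p.coeff i) {r : R} (hr : 0 ≤ r) :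
    0 ≤ p.eval r := by
  rw [eval_eq_sum_range]
  exact Finset.sum_nonneg fun i _ => mul_nonneg (hp i) (pow_nonneg hr i)

section DerivNumerator

variable {R : Type*} [CommRing R]

noncomputable def derivNumerator (s : R) (l : ℕ) (p : R[X]) : R[X] :=
  (C (l : R) + C s * X) * p - X * derivative p

theorem coeff_derivNumerator_zero (s : R) (l : ℕ) (p : R[X]) :
    (derivNumerator s l p).coeff 0 = l * p.coeff 0 := by
  simp [derivNumerator, add_mul, mul_assoc]

theorem coeff_derivNumerator_succ (s : R) (l : ℕ) (p : R[X]) (n : ℕ) :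
    (derivNumerator s l p).coeff (n + 1) = (l - (n + 1)) * p.coeff (n + 1) + s * p.coeff n := by
  simp only [derivNumerator, add_mul, mul_assoc, coeff_sub, coeff_add, coeff_C_mul,
    coeff_X_mul, coeff_derivative]
  ring

theorem natDegree_derivNumerator_le (s : R) (l : ℕ) (p : R[X]) :
    (derivNumerator s l p).natDegree ≤ p.natDegree + 1 := by
  refine natDegree_le_iff_coeff_eq_zero.mpr fun n hn => ?_
  obtain ⟨m, rfl⟩ : ∃ m, n = m + 1 := ⟨n - 1, by omega⟩
  rw [coeff_derivNumerator_succ, coeff_eq_zero_of_natDegree_lt (by omega : p.natDegree < m + 1),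
    coeff_eq_zero_of_natDegree_lt (by omega : p.natDegree < m)]
  ring

theorem natDegree_derivNumerator [IsDomain R] {s : R} (hs : s ≠ 0) (l : ℕ) {p : R[X]}
    (hp : p ≠ 0) : (derivNumerator s l p).natDegree = p.natDegree + 1 := by
  refine (natDegree_derivNumerator_le s l p).antisymm (le_natDegree_of_ne_zero ?_)
  rw [coeff_derivNumerator_succ, coeff_natDegree_succ_eq_zero, mul_zero, zero_add]
  exact mul_ne_zero hs (leadingCoeff_ne_zero.mpr hp)

theorem coeff_derivNumerator_nonneg [PartialOrder R] [IsOrderedRing R] {s : R} (hs : 0 ≤ s)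
    {l : ℕ} {p : R[X]} (hl : p.natDegree ≤ l) (hp : ∀ i, 0 ≤ p.coeff i) (i : ℕ) :
    0 ≤ (derivNumerator s l p).coeff i := by
  rcases i with _ | n
  · rw [coeff_derivNumerator_zero]
    exact mul_nonneg (Nat.cast_nonneg l) (hp 0)
  rw [coeff_derivNumerator_succ]
  refine add_nonneg ?_ (mul_nonneg hs (hp n))
  by_cases hn : n + 1 ≤ l
  · refine mul_nonneg (sub_nonneg.mpr ?_) (hp (n + 1))
    simpa using Nat.mono_cast (α := R) hn
  · rw [coeff_eq_zero_of_natDegree_lt (by omega), mul_zero]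

end DerivNumerator

end Polynomial

noncomputable def decayQuotient (s : ℝ) (l : ℕ) (p : ℝ[X]) (r : ℝ) : ℝ :=
  p.eval r * Real.exp (-s * r) / r ^ l

theorem decayQuotient_nonneg (s : ℝ) (l : ℕ) {p : ℝ[X]} (hp : ∀ i, 0 ≤ p.coeff i) {r : ℝ}
    (hr : 0 ≤ r) : 0 ≤ decayQuotient s l p r :=
  div_nonneg (mul_nonneg (eval_nonneg_of_coeff_nonneg hp hr) (Real.exp_pos _).le)
    (pow_nonneg hr l)

theorem hasDerivAt_decayQuotient (s : ℝ) (l : ℕ) (p : ℝ[X]) {r : ℝ} (hr : r ≠ 0) :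
    HasDerivAt (decayQuotient s l p)
      (-((derivNumerator s l p).eval r) * Real.exp (-s * r) / r ^ (l + 1)) r := by
  have hexp : HasDerivAt (fun r => Real.exp (-s * r)) (Real.exp (-s * r) * -s) r := by
    simpa using ((hasDerivAt_id r).const_mul (-s)).exp
  have := ((p.hasDerivAt r).mul hexp).div (hasDerivAt_pow l r) (pow_ne_zero l hr)
  refine this.congr_deriv ?_
  simp only [derivNumerator, eval_sub, eval_mul, eval_add, eval_C, eval_X, Pi.mul_apply]
  -- `hasDerivAt_pow` produces `r ^ (l - 1)`, so `l = 0` is treated apart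
  rcases l with _ | m
  · field_simp
    ring
  · simp only [Nat.add_sub_cancel]
    field_simp
    ring

theorem deriv_decayQuotient (s : ℝ) (l : ℕ) (p : ℝ[X]) {r : ℝ} (hr : r ≠ 0) :
    deriv (decayQuotient s l p) r = -decayQuotient s (l + 1) (derivNumerator s l p) r := by
  rw [(hasDerivAt_decayQuotient s l p hr).deriv, decayQuotient, neg_mul, neg_div]

theorem antitoneOn_decayQuotient {s : ℝ} (hs : 0 ≤ s) {l : ℕ} {p : ℝ[X]}
    (hl : p.natDegree ≤ l) (hp : ∀ i, 0 ≤ p.coeff i) :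
    AntitoneOn (decayQuotient s l p) (Ioi 0) := by
  have hderiv (x : ℝ) (hx : x ∈ Ioi 0) := hasDerivAt_decayQuotient s l p (ne_of_gt hx)
  refine antitoneOn_of_hasDerivWithinAt_nonpos (convex_Ioi 0)
    (fun x hx => (hderiv x hx).continuousAt.continuousWithinAt) (f' := deriv (decayQuotient s l p))
    (fun x hx => ?_) (fun x hx => ?_) <;> rw [interior_Ioi] at hx
  · exact (hderiv x hx).deriv ▸ (hderiv x hx).hasDerivWithinAt
  · rw [deriv_decayQuotient s l p (ne_of_gt hx), neg_nonpos]
    exact decayQuotient_nonneg s _ (coeff_derivNumerator_nonneg hs hl hp) (le_of_lt hx)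

theorem neg_one_pow_mul_iteratedDeriv_decayQuotient_nonneg {s : ℝ} (hs : 0 ≤ s) (j : ℕ) :
    ∀ {l : ℕ} {p : ℝ[X]}, p.natDegree ≤ l → (∀ i, 0 ≤ p.coeff i) → ∀ {r : ℝ}, 0 < r →
      0 ≤ (-1) ^ j * iteratedDeriv j (decayQuotient s l p) r := by
  induction j with
  | zero =>
    intro l p _ hp r hr
    simpa using decayQuotient_nonneg s l hp hr.le
  | succ j ih =>
    intro l p hl hp r hr
    have hderiv : deriv (decayQuotient s l p) =ᶠ[𝓝 r]
        fun x => -decayQuotient s (l + 1) (derivNumerator s l p) x := by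
      filter_upwards [Ioi_mem_nhds hr] with x hx
      exact deriv_decayQuotient s l p (ne_of_gt hx)
    have hq := ih ((natDegree_derivNumerator_le s l p).trans (Nat.succ_le_succ hl))
      (coeff_derivNumerator_nonneg hs hl hp) hr
    rw [iteratedDeriv_succ', hderiv.iteratedDeriv_eq, iteratedDeriv_fun_neg, pow_succ]
    linarith

theorem stmt11 (lam : ℝ) (hlam : 0 < lam) (k l : ℕ) (hkl : k < l)
    (p : Polynomial ℝ) (hp : p ≠ 0) (hdeg : p.natDegree = k)
    (hcoeff : ∀ i, 0 ≤ p.coeff i)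
    (Φ : ℝ → ℝ)
    (hΦ : ∀ r : ℝ, Φ r = p.eval r * Real.exp (-Real.sqrt lam * r) / r ^ l) :
    ∃ q : Polynomial ℝ,
      q = (C (l : ℝ) + C (Real.sqrt lam) * X) * p - X * p.derivative ∧
      q.natDegree = k + 1 ∧
      (∀ i, 0 ≤ q.coeff i) ∧
      (∀ r : ℝ, 0 < r →
        HasDerivAt Φ (-(q.eval r) * Real.exp (-Real.sqrt lam * r) / r ^ (l + 1)) r) ∧
      (∀ r : ℝ, 0 < r → 0 ≤ Φ r) ∧
      (∀ r s : ℝ, 0 < r → r ≤ s → Φ s ≤ Φ r) ∧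
      (∀ j : ℕ, ∀ r : ℝ, 0 < r →
        (Even j → 0 ≤ iteratedDeriv j Φ r) ∧ (Odd j → iteratedDeriv j Φ r ≤ 0)) := by
  obtain rfl : Φ = decayQuotient (Real.sqrt lam) l p := funext hΦ
  have hs : 0 ≤ Real.sqrt lam := Real.sqrt_nonneg lam
  have hl : p.natDegree ≤ l := hdeg ▸ hkl.le
  refine ⟨derivNumerator (Real.sqrt lam) l p, rfl,
    hdeg ▸ natDegree_derivNumerator (Real.sqrt_pos.mpr hlam).ne' l hp,
    coeff_derivNumerator_nonneg hs hl hcoeff,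
    fun r hr => hasDerivAt_decayQuotient _ l p hr.ne',
    fun r hr => decayQuotient_nonneg _ l hcoeff hr.le,
    fun r t hr hrt => antitoneOn_decayQuotient hs hl hcoeff hr (hr.trans_le hrt) hrt,
    fun j r hr => ?_⟩
  have hsign := neg_one_pow_mul_iteratedDeriv_decayQuotient_nonneg hs j hl hcoeff hr
  exact ⟨fun hj => by simpa [hj.neg_one_pow] using hsign,
    fun hj => by simpa [hj.neg_one_pow] using hsign⟩
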